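/- arXiv:2409.15641 — 2 statements merged into one kernel-verified Lean document; each statement's English description precedes it below -/
import Mathlib

section
/- The set of images of diversity indices of a fixed rooted phylogenetic X-tree (T, ℓ) is a convex subset of ℝⁿ: if s and t are images of diversity indices and 0 ≤ λ ≤ 1, then λs + (1−λ)t is also the image of a diversity index. -/
/-! The valid coefficient systems are cut out by linear equalities and inequalities, hence form a
convex set, and the image `γ ↦ (x ↦ ∑ e, γ x e * ℓ e)` is linear in `γ`; a linear image of a convex
set is convex. -/

open Finset

section CoefficientSystem

variable {X E : Type} [Fintype X]

/-- `P x` is the set of edges on the root-to-`x` path; `N` lists the pairs of coefficients that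
neutrality forces to be equal. -/
def IsCoefficientSystem (P : X → Finset E) (N : Set ((X × E) × (X × E))) (γ : X → E → ℝ) :
    Prop :=
  (∀ x e, 0 ≤ γ x e) ∧ (∀ e, ∑ x, γ x e = 1) ∧ (∀ x e, e ∉ P x → γ x e = 0) ∧
    (∀ p ∈ N, γ p.1.1 p.1.2 = γ p.2.1 p.2.2)

theorem convex_setOf_isCoefficientSystem (P : X → Finset E) (N : Set ((X × E) × (X × E))) :
    Convex ℝ {γ | IsCoefficientSystem P N γ} := by
  rintro γ ⟨hγ_nonneg, hγ_sum, hγ_descent, hγ_neutral⟩ δ ⟨hδ_nonneg, hδ_sum, hδ_descent, hδ_neutral⟩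
    a b ha hb hab
  refine ⟨fun x e => ?_, fun e => ?_, fun x e he => ?_, fun p hp => ?_⟩
  · simp only [Pi.add_apply, Pi.smul_apply, smul_eq_mul]
    exact add_nonneg (mul_nonneg ha (hγ_nonneg x e)) (mul_nonneg hb (hδ_nonneg x e))
  · simp only [Pi.add_apply, Pi.smul_apply, smul_eq_mul]
    rw [sum_add_distrib, ← mul_sum, ← mul_sum, hγ_sum, hδ_sum, mul_one, mul_one, hab]
  · simp [hγ_descent x e he, hδ_descent x e he]
  · simp [hγ_neutral p hp, hδ_neutral p hp]

def diversityImage [Fintype E] (ℓ : E → ℝ) : (X → E → ℝ) →ₗ[ℝ] (X → ℝ) where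
  toFun γ x := ∑ e, γ x e * ℓ e
  map_add' γ δ := by ext x; simp [add_mul, sum_add_distrib]
  map_smul' c γ := by ext x; simp [mul_sum, mul_assoc]

theorem convex_diversityImage_image [Fintype E] (ℓ : E → ℝ) (P : X → Finset E)
    (N : Set ((X × E) × (X × E))) :
    Convex ℝ (diversityImage ℓ '' {γ | IsCoefficientSystem P N γ}) :=
  (convex_setOf_isCoefficientSystem P N).linear_image (diversityImage ℓ)

end CoefficientSystem

theorem stmt_6_general (X E : Type) [Fintype X] [Fintype E]
    (ℓ : E → ℝ)
    (P : X → Finset E)                            -- root-to-x path edges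
    (N : Set ((X × E) × (X × E)))                 -- neutrality (equality) conditions
    (Valid : (X → E → ℝ) → Prop)
    (hValid : ∀ γ, Valid γ ↔
      (∀ x e, 0 ≤ γ x e) ∧ (∀ e, ∑ x, γ x e = 1) ∧
      (∀ x e, e ∉ P x → γ x e = 0) ∧
      (∀ p ∈ N, γ p.1.1 p.1.2 = γ p.2.1 p.2.2))
    (γs γt : X → E → ℝ) (hs : Valid γs) (ht : Valid γt)
    (s t : X → ℝ)
    (hsim : ∀ x, s x = ∑ e, γs x e * ℓ e)
    (htim : ∀ x, t x = ∑ e, γt x e * ℓ e)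
    (lam : ℝ) (h0 : 0 ≤ lam) (h1 : lam ≤ 1) :
    ∃ γ : X → E → ℝ, Valid γ ∧
      ∀ x, lam * s x + (1 - lam) * t x = ∑ e, γ x e * ℓ e := by
  have hValid_iff : ∀ γ, Valid γ ↔ IsCoefficientSystem P N γ := hValid
  have hs_image : s = diversityImage ℓ γs := funext hsim
  have ht_image : t = diversityImage ℓ γt := funext htim
  obtain ⟨γ, hγ, hγ_image⟩ := convex_diversityImage_image ℓ P N
    ⟨γs, (hValid_iff γs).1 hs, hs_image.symm⟩ ⟨γt, (hValid_iff γt).1 ht, ht_image.symm⟩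
    h0 (sub_nonneg.2 h1) (add_sub_cancel lam 1)
  refine ⟨γ, (hValid_iff γ).2 hγ, fun x => ?_⟩
  have hγ_x := congrFun hγ_image x
  simp only [Pi.add_apply, Pi.smul_apply, smul_eq_mul] at hγ_x
  exact hγ_x.symm

/-- The set of images of diversity indices of a fixed rooted phylogenetic X-tree is
convex: a convex combination of two images of valid coefficient systems (satisfying
the convexity, descent, and neutrality conditions) is again such an image. -/
theorem stmt_6 (X E : Type) [Fintype X] [Fintype E]
    (ℓ : E → ℝ) (hℓ : ∀ e, 0 ≤ ℓ e)
    (P : X → Finset E)                            -- root-to-x path edges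
    (N : Set ((X × E) × (X × E)))                 -- neutrality (equality) conditions
    (Valid : (X → E → ℝ) → Prop)
    (hValid : ∀ γ, Valid γ ↔
      (∀ x e, 0 ≤ γ x e) ∧ (∀ e, ∑ x, γ x e = 1) ∧
      (∀ x e, e ∉ P x → γ x e = 0) ∧
      (∀ p ∈ N, γ p.1.1 p.1.2 = γ p.2.1 p.2.2))
    (γs γt : X → E → ℝ) (hs : Valid γs) (ht : Valid γt)
    (s t : X → ℝ)
    (hsim : ∀ x, s x = ∑ e, γs x e * ℓ e)
    (htim : ∀ x, t x = ∑ e, γt x e * ℓ e)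
    (lam : ℝ) (h0 : 0 ≤ lam) (h1 : lam ≤ 1) :
    ∃ γ : X → E → ℝ, Valid γ ∧
      ∀ x, lam * s x + (1 - lam) * t x = ∑ e, γ x e * ℓ e :=
  stmt_6_general X E ℓ P N Valid hValid γs γt hs ht s t hsim htim lam h0 h1
end

section
/- Suppose s and t are images of diversity indices of (T, ℓ) whose coefficient matrices agree on every column except the column of a single edge e ∈ E_f, and suppose the free parameter of column e for s is strictly between the minimum and maximum admissible values while for t¹ (resp. t²) it is maximum (resp. minimum). Then s is a strict convex combination of two distinct points t¹·type and t²·type of P(T, ℓ), hence s is not an extreme point of P(T, ℓ). -/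
open Set

theorem AffineMap.apply_mem_openSegment_of_mem_Ioo {𝕜 E : Type*} [Field 𝕜] [LinearOrder 𝕜]
    [IsStrictOrderedRing 𝕜] [AddCommGroup E] [Module 𝕜 E] (f : 𝕜 →ᵃ[𝕜] E) {a b c : 𝕜}
    (hc : c ∈ Ioo a b) : f c ∈ openSegment 𝕜 (f a) (f b) :=
  image_openSegment 𝕜 f a b ▸ mem_image_of_mem f (Ioo_subset_openSegment hc)

theorem notMem_extremePoints_of_mem_openSegment {𝕜 E : Type*} [Semiring 𝕜] [PartialOrder 𝕜]
    [AddCommMonoid E] [SMul 𝕜 E] {A : Set E} {x y z : E} (hx : x ∈ A)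
    (hy : y ∈ A) (hxy : x ≠ y) (hz : z ∈ openSegment 𝕜 x y) : z ∉ A.extremePoints 𝕜 := by
  intro hext
  obtain ⟨hxz, hyz⟩ := (mem_extremePoints.1 hext).2 x hx y hy hz
  exact hxy (hxz.trans hyz.symm)

/-- If the image s of a diversity index is obtained (via the affine map f from the
free parameter of the column of a single independent edge e ∈ E_f to score vectors,
all other columns being fixed) from a parameter value strictly between the minimum
lo and maximum hi admissible values, while t₁ and t₂ come from the maximum and
minimum values, and t₁ ≠ t₂, then s is a strict convex combination of the distinct
points t₁, t₂ ∈ P(T,ℓ) and hence not an extreme point of P(T,ℓ). -/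
theorem stmt_14 (n : ℕ) (P : Set (Fin n → ℝ))
    (lo hi : ℝ)
    (f : ℝ →ᵃ[ℝ] (Fin n → ℝ))           -- score vector as affine map of the free parameter
    (hrange : ∀ c ∈ Set.Icc lo hi, f c ∈ P)
    (c : ℝ) (hc : c ∈ Set.Ioo lo hi)
    (s t₁ t₂ : Fin n → ℝ)
    (hs : s = f c) (ht₁ : t₁ = f hi) (ht₂ : t₂ = f lo)
    (hne : t₁ ≠ t₂) :
    (∃ α : ℝ, 0 < α ∧ α < 1 ∧ s = α • t₁ + (1 - α) • t₂) ∧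
    s ∉ Set.extremePoints ℝ P := by
  subst hs ht₁ ht₂
  have hseg : f c ∈ openSegment ℝ (f hi) (f lo) :=
    openSegment_symm ℝ (f lo) (f hi) ▸ f.apply_mem_openSegment_of_mem_Ioo hc
  have hlo : lo ≤ hi := hc.1.le.trans hc.2.le
  refine ⟨?_, notMem_extremePoints_of_mem_openSegment (hrange hi ⟨hlo, le_rfl⟩)
    (hrange lo ⟨le_rfl, hlo⟩) hne hseg⟩
  obtain ⟨α, β, hα, hβ, hαβ, hcomb⟩ := hseg
  obtain rfl : β = 1 - α := by linarith
  exact ⟨α, hα, by linarith, hcomb.symm⟩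
end
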